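/- Let n ≥ 2, let (X,d) be a complete metric space with |X| ≥ n, and let T : X → X be a mapping contracting total pairwise distance on n points. Suppose T has a fixed point x* that is the limit of an iteration sequence x₀, x₁ = Tx₀, x₂ = Tx₁, ... with xᵢ ≠ x* for all i ≥ 1. Then x* is the unique fixed point of T. -/

import Mathlib

/-!
If `y ≠ x*` were a second fixed point, then for `k` large the `n`-tuple
`(y, x*, x_k, …, x_{k+n-3})` consists of distinct points, and so does its image under every
iterate `T^[m]`, which is `(y, x*, x_{k+m}, …)`: the orbit terms never repeat, since a repeating
orbit is periodic and could only converge to `x*` by being equal to it. Iterating the contraction,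
`d(y, x*) ≤ S(T^[m] ∘ tuple) ≤ α^m S(tuple) → 0`.
-/

noncomputable def totalS {X : Type*} [MetricSpace X] {n : ℕ} (x : Fin n → X) : ℝ :=
  ∑ i : Fin n, ∑ j ∈ Finset.Ioi i, dist (x i) (x j)

open Filter Topology Function

section

variable {X : Type*}

lemma iterate_apply_eq_add {T : X → X} {x : ℕ → X} (hx : ∀ i, x (i + 1) = T (x i)) (a t : ℕ) :
    T^[t] (x a) = x (a + t) := by
  induction t with
  | zero => rfl
  | succ t ih => rw [iterate_succ_apply', ih, ← hx, add_assoc]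

lemma Function.IsPeriodicPt.eq_of_tendsto_iterate [TopologicalSpace X] [T2Space X] {T : X → X}
    {p : ℕ} {q z : X} (hq : IsPeriodicPt T p q) (hp : 0 < p)
    (hlim : Tendsto (fun i => T^[i] q) atTop (𝓝 z)) : q = z :=
  tendsto_nhds_unique tendsto_const_nhds <|
    (hlim.comp (tendsto_id.atTop_mul_const' hp)).congr fun i => (hq.const_mul i).eq

lemma injOn_of_tendsto_of_succ_eq [TopologicalSpace X] [T2Space X] {T : X → X} {x : ℕ → X} {p : X}
    (hx : ∀ i, x (i + 1) = T (x i)) (hlim : Tendsto x atTop (𝓝 p)) :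
    Set.InjOn x {i | x i ≠ p} := by
  suffices h : ∀ a b, x a ≠ p → a < b → x a ≠ x b by
    intro a ha b hb hab
    by_contra hne
    rcases lt_or_gt_of_ne hne with hlt | hlt
    exacts [h a b ha hlt hab, h b a hb hlt hab.symm]
  intro a b ha hab heq
  have hper : IsPeriodicPt T (b - a) (x a) := by
    rw [IsPeriodicPt, IsFixedPt, iterate_apply_eq_add hx, heq, Nat.add_sub_cancel' hab.le]
  refine ha (hper.eq_of_tendsto_iterate (Nat.sub_pos_of_lt hab) ?_)
  simp only [iterate_apply_eq_add hx, add_comm a]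
  exact hlim.comp (tendsto_add_atTop_nat a)

lemma injective_iterate_comp_cons_cons {n : ℕ} {T : X → X} {p q : X} (hp : IsFixedPt T p)
    (hq : IsFixedPt T q) (hpq : p ≠ q) {x : ℕ → X} (hx : ∀ i, x (i + 1) = T (x i)) {k : ℕ}
    (hinj : Set.InjOn x (Set.Ici k)) (hxp : ∀ j ≥ k, x j ≠ p) (hxq : ∀ j ≥ k, x j ≠ q) (m : ℕ) :
    Injective (T^[m] ∘ (Fin.cons p (Fin.cons q fun i : Fin n => x (k + i)) : Fin (n + 2) → X)) := by
  rw [Fin.comp_cons, Fin.comp_cons, iterate_fixed hp, iterate_fixed hq,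
    Fin.cons_injective_iff, Fin.cons_injective_iff, Fin.range_cons]
  simp only [comp_def, iterate_apply_eq_add hx]
  refine ⟨?_, ?_, ?_⟩
  · rintro (h | ⟨i, hi⟩)
    exacts [hpq h, hxp _ (by omega) hi]
  · rintro ⟨i, hi⟩
    exact hxq _ (by omega) hi
  · intro i j hij
    have := hinj (Set.mem_Ici.2 (by omega)) (Set.mem_Ici.2 (by omega)) hij
    ext
    omega

section totalS

variable [MetricSpace X] {n : ℕ}

lemma dist_le_totalS (x : Fin n → X) {i j : Fin n} (hij : i < j) : dist (x i) (x j) ≤ totalS x :=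
  calc dist (x i) (x j) ≤ ∑ j ∈ Finset.Ioi i, dist (x i) (x j) :=
        Finset.single_le_sum (fun _ _ => dist_nonneg) (Finset.mem_Ioi.2 hij)
    _ ≤ totalS x :=
        Finset.single_le_sum (f := fun i => ∑ j ∈ Finset.Ioi i, dist (x i) (x j))
          (fun _ _ => Finset.sum_nonneg fun _ _ => dist_nonneg) (Finset.mem_univ i)

variable {T : X → X} {α : ℝ}
  (hT : ∀ x : Fin n → X, Injective x → totalS (T ∘ x) ≤ α * totalS x)
  {z : Fin n → X} (hz : ∀ m, Injective (T^[m] ∘ z))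
include hT hz

lemma totalS_iterate_comp_le (hα : 0 ≤ α) (m : ℕ) : totalS (T^[m] ∘ z) ≤ α ^ m * totalS z := by
  induction m with
  | zero => simp
  | succ m ih =>
    calc totalS (T^[m + 1] ∘ z) = totalS (T ∘ T^[m] ∘ z) := by rw [iterate_succ', comp_assoc]
      _ ≤ α * totalS (T^[m] ∘ z) := hT _ (hz m)
      _ ≤ α * (α ^ m * totalS z) := mul_le_mul_of_nonneg_left ih hα
      _ = α ^ (m + 1) * totalS z := by ring

lemma eq_of_isFixedPt_of_injective_iterate_comp (hα0 : 0 ≤ α) (hα1 : α < 1) {i j : Fin n}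
    (hi : IsFixedPt T (z i)) (hj : IsFixedPt T (z j)) : i = j := by
  wlog hij : i < j generalizing i j
  · rcases (not_lt.1 hij).lt_or_eq with h | h
    exacts [(this hj hi h).symm, h.symm]
  have hbound (m : ℕ) : dist (z i) (z j) ≤ α ^ m * totalS z :=
    calc dist (z i) (z j) = dist ((T^[m] ∘ z) i) ((T^[m] ∘ z) j) := by
          simp only [comp_apply, iterate_fixed hi m, iterate_fixed hj m]
      _ ≤ totalS (T^[m] ∘ z) := dist_le_totalS _ hij
      _ ≤ α ^ m * totalS z := totalS_iterate_comp_le hT hz hα0 m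
  have hlim : Tendsto (fun m : ℕ => α ^ m * totalS z) atTop (𝓝 0) := by
    simpa using (tendsto_pow_atTop_nhds_zero_of_lt_one hα0 hα1).mul_const (totalS z)
  exact hz 0 (dist_le_zero.1 (ge_of_tendsto' hlim hbound))

end totalS

end

theorem stmt_7_general {X : Type*} [MetricSpace X] (n : ℕ) (hn : 2 ≤ n)
    (T : X → X)
    (hT : ∃ α : ℝ, 0 ≤ α ∧ α < 1 ∧
      ∀ x : Fin n → X, Function.Injective x → totalS (T ∘ x) ≤ α * totalS x)
    (xstar : X) (hfix : T xstar = xstar)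
    (x : ℕ → X) (hiter : ∀ i : ℕ, x (i + 1) = T (x i))
    (hlim : Filter.Tendsto x Filter.atTop (nhds xstar))
    (hne : ∀ i : ℕ, 1 ≤ i → x i ≠ xstar) :
    ∀ y : X, T y = y → y = xstar := by
  obtain ⟨α, hα0, hα1, hcontr⟩ := hT
  intro y hy
  by_contra hyx
  obtain ⟨n, rfl⟩ := Nat.exists_eq_add_of_le' hn
  obtain ⟨k, hk⟩ :=
    ((eventually_ge_atTop 1).and (hlim.eventually_ne (Ne.symm hyx))).exists_forall_of_atTop
  have hinj : Set.InjOn x (Set.Ici k) :=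
    (injOn_of_tendsto_of_succ_eq hiter hlim).mono fun i hi => hne i ((hk k le_rfl).1.trans hi)
  have hz := injective_iterate_comp_cons_cons (n := n) hy hfix hyx hiter hinj
    (fun j hj => (hk j hj).2) (fun j hj => hne j ((hk k le_rfl).1.trans hj))
  exact absurd (eq_of_isFixedPt_of_injective_iterate_comp hcontr hz hα0 hα1
    (i := 0) (j := 1) hy hfix) (by simp)

theorem stmt_7 {X : Type*} [MetricSpace X] [CompleteSpace X] (n : ℕ) (hn : 2 ≤ n)
    (hcard : ∃ f : Fin n → X, Function.Injective f)
    (T : X → X)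
    (hT : ∃ α : ℝ, 0 ≤ α ∧ α < 1 ∧
      ∀ x : Fin n → X, Function.Injective x → totalS (T ∘ x) ≤ α * totalS x)
    (xstar : X) (hfix : T xstar = xstar)
    (x : ℕ → X) (hiter : ∀ i : ℕ, x (i + 1) = T (x i))
    (hlim : Filter.Tendsto x Filter.atTop (nhds xstar))
    (hne : ∀ i : ℕ, 1 ≤ i → x i ≠ xstar) :
    ∀ y : X, T y = y → y = xstar :=
  stmt_7_general n hn T hT xstar hfix x hiter hlim hne
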